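/- arXiv:math/0504052 — 5 statements merged into one kernel-verified Lean document; each statement's English description precedes it below -/
import Mathlib

section
/- Let n ≥ 2 be an integer, let c and d be positive integers, and set m = lcm(c,d). Let i₁,…,i_k be distinct elements of {1,…,n−1} and let h ∈ {1,…,k}. Then the intersection of the subgroup of ℤⁿ generated by {c·e₁,…,c·eₙ} ∪ {d·(e_{i_1}+eₙ),…,d·(e_{i_{h−1}}+eₙ)} with the subgroup generated by d·(e_{i_h}+eₙ) equals the subgroup generated by m·(e_{i_h}+eₙ). (For h = 1 the first set is just {c·e₁,…,c·eₙ}.) -/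
/-! Look at the coordinate `a` of `e_a + e_b` (with `a = i_h`, `b = n`). Every generator of the
first subgroup `H` has `a`-coordinate divisible by `c` (the `e_{i_j} + eₙ` with `j < h` vanish
there by injectivity of `i`), so a multiple `t • d • (e_a + e_b)` lying in `H` has
`c ∣ t d`, hence `lcm c d ∣ t d`. Conversely `c • (e_a + e_b) = c e_a + c e_b ∈ H`. -/

namespace AddSubgroup

variable {M : Type*} [AddCommGroup M]

theorem dvd_of_mem_closure (f : M →+ ℤ) {c : ℤ} {S : Set M} (hS : ∀ y ∈ S, c ∣ f y) :
    ∀ x ∈ closure S, c ∣ f x := by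
  intro x hx
  induction hx using closure_induction with
  | mem y hy => exact hS y hy
  | zero => simp
  | add y z _ _ hy hz => simpa using dvd_add hy hz
  | neg y _ hy => simpa using hy

theorem inf_zmultiples_smul_eq (f : M →+ ℤ) {v : M} (hv : f v = 1) {c d : ℤ}
    {H : AddSubgroup M} (hH : ∀ x ∈ H, c ∣ f x) (hcv : c • v ∈ H) :
    H ⊓ zmultiples (d • v) = zmultiples ((c.lcm d : ℤ) • v) := by
  apply le_antisymm
  · rintro x ⟨hxH, t, rfl⟩
    have hfx : f (t • d • v) = t * d := by simp [hv]
    obtain ⟨s, hs⟩ : (c.lcm d : ℤ) ∣ t * d :=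
      Int.coe_lcm_dvd (hfx ▸ hH _ hxH) (dvd_mul_left d t)
    exact ⟨s, show s • _ = t • _ by rw [smul_smul, smul_smul, hs, mul_comm]⟩
  · rw [zmultiples_le, mem_inf]
    obtain ⟨p, hp⟩ := Int.dvd_lcm_left c d
    obtain ⟨q, hq⟩ := Int.dvd_lcm_right c d
    refine ⟨?_, ⟨q, ?_⟩⟩
    · rw [hp, mul_comm, mul_smul]
      exact zsmul_mem hcv p
    · rw [hq, mul_comm, mul_smul]

end AddSubgroup

/-- For `n ≥ 2`, positive integers `c, d` with `m = lcm(c,d)`, distinct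
indices `i₁, …, i_k ∈ {1, …, n-1}` and `h ∈ {1, …, k}`, the intersection of the subgroup
of `ℤⁿ` generated by `{c·e₁, …, c·eₙ} ∪ {d·(e_{i_1}+eₙ), …, d·(e_{i_{h-1}}+eₙ)}` with the
subgroup generated by `d·(e_{i_h}+eₙ)` is the subgroup generated by `m·(e_{i_h}+eₙ)`. -/
theorem stmt0 (n k : ℕ) (hn : 2 ≤ n) (c d : ℕ)
    (i : Fin k → Fin (n - 1)) (hinj : Function.Injective i) (h : Fin k) :
    AddSubgroup.closure
        ((Set.range fun j : Fin n => (Pi.single j ((c : ℤ)) : Fin n → ℤ)) ∪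
          ((fun j : Fin k =>
              ((d : ℤ) • (Pi.single (Fin.castLE (by omega) (i j)) (1 : ℤ) +
                Pi.single (⟨n - 1, by omega⟩ : Fin n) (1 : ℤ)) : Fin n → ℤ)) ''
            {j : Fin k | j < h})) ⊓
      AddSubgroup.closure
        {((d : ℤ) • (Pi.single (Fin.castLE (by omega) (i h)) (1 : ℤ) +
            Pi.single (⟨n - 1, by omega⟩ : Fin n) (1 : ℤ)) : Fin n → ℤ)} =
    AddSubgroup.closure
        {(((Nat.lcm c d : ℕ) : ℤ) • (Pi.single (Fin.castLE (by omega) (i h)) (1 : ℤ) +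
            Pi.single (⟨n - 1, by omega⟩ : Fin n) (1 : ℤ)) : Fin n → ℤ)} := by
  set b : Fin n := ⟨n - 1, by omega⟩
  have hne : ∀ j, Fin.castLE (Nat.sub_le n 1) (i j) ≠ b := fun j e ↦ by
    have := congrArg Fin.val e
    simp [b] at this
    omega
  set a := Fin.castLE (Nat.sub_le n 1) (i h)
  have hab : a ≠ b := hne h
  have hv : (Pi.single a (1 : ℤ) + Pi.single b 1 : Fin n → ℤ) a = 1 := by
    simp [Pi.single_eq_of_ne hab]
  have hlcm : (Int.lcm c d : ℤ) = (Nat.lcm c d : ℤ) := rfl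
  simp only [← AddSubgroup.zmultiples_eq_closure, ← hlcm]
  refine AddSubgroup.inf_zmultiples_smul_eq (Pi.evalAddMonoidHom _ a) hv
    (AddSubgroup.dvd_of_mem_closure _ ?_) ?_
  · rintro y (⟨j, rfl⟩ | ⟨j, hj, rfl⟩)
    · by_cases hja : j = a
      · simp [hja]
      · simp [Pi.single_eq_of_ne' hja]
    · have hija : Fin.castLE (Nat.sub_le n 1) (i j) ≠ a :=
        fun e ↦ hj.ne (hinj (Fin.castLE_injective _ e))
      simp [Pi.single_eq_of_ne' hija, Pi.single_eq_of_ne' hab.symm]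
  · rw [smul_add, ← Pi.single_smul, ← Pi.single_smul, smul_eq_mul, mul_one]
    exact add_mem (AddSubgroup.subset_closure (Or.inl ⟨a, rfl⟩))
      (AddSubgroup.subset_closure (Or.inl ⟨b, rfl⟩))
end

section
/- Let n ≥ 2 be an integer, let c and d be positive integers, set m = lcm(c,d), and let i₁,…,i_k be distinct elements of {1,…,n−1}. Let K be a field and let ψ : K[x₁,…,xₙ,y₁,…,y_k] → K[u₁,…,uₙ] be the K-algebra homomorphism with ψ(xⱼ) = uⱼ^c for j = 1,…,n and ψ(yⱼ) = u_{i_j}^d·uₙ^d for j = 1,…,k. Then ker ψ is generated by the k binomials yⱼ^{m/d} − x_{i_j}^{m/c}·xₙ^{m/c} (j = 1,…,k); in particular the simplicial toric variety parametrized by xⱼ = uⱼ^c, yⱼ = u_{i_j}^d uₙ^d is a complete intersection. -/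
/-!
The parametrization is monomial: `ψ` sends `X^s` to `u^(E s)` for a linear exponent map `E`.
Modulo the binomials `y_b^(m/d) - x_{i_b}^(m/c) x_n^(m/c)`, every monomial reduces to one whose
`y`-exponents are all `< m/d`. On such exponents `E` is injective: the `u_{i_b}`-exponent
`a c + e d` of the image determines `e < m/d = c / gcd(c, d)` (and then `a`), and once all
`y`-exponents agree, each remaining `x`-exponent is the image exponent minus a known part, divided
by `c`. So an element of the kernel reduces to a combination of monomials with pairwise distinct
images under `ψ`, which must be zero.
-/

open MvPolynomial

namespace MvPolynomial

variable {σ τ R : Type*}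

theorem algHom_monomial_eq [CommSemiring R] {φ : MvPolynomial σ R →ₐ[R] MvPolynomial τ R}
    {w : σ → τ →₀ ℕ} (hw : ∀ i, φ (X i) = monomial (w i) 1) (s : σ →₀ ℕ) (r : R) :
    φ (monomial s r) = monomial (Finsupp.linearCombination ℕ w s) r := by
  rw [aeval_unique φ, aeval_monomial, Finsupp.linearCombination_apply,
    monomial_finsupp_sum_index, algebraMap_eq]
  simp only [Function.comp_apply, hw, monomial_pow, one_pow]

theorem eq_zero_of_algHom_eq_zero_of_injOn [CommSemiring R]
    {φ : MvPolynomial σ R →ₐ[R] MvPolynomial τ R} {w : σ → τ →₀ ℕ}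
    (hw : ∀ i, φ (X i) = monomial (w i) 1) {p : MvPolynomial σ R} (hp : φ p = 0)
    (hinj : Set.InjOn (Finsupp.linearCombination ℕ w) p.support) : p = 0 := by
  classical
  by_contra hne
  obtain ⟨s, hs⟩ := support_nonempty.2 hne
  have hcoeff : coeff (Finsupp.linearCombination ℕ w s) (φ p) = coeff s p := by
    conv_lhs => rw [p.as_sum]
    simp only [map_sum, algHom_monomial_eq hw, coeff_sum, coeff_monomial]
    refine (Finset.sum_eq_single s (fun t ht hts => if_neg fun h => hts (hinj ht hs h)) ?_).trans
      (if_pos rfl)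
    exact fun h => absurd hs h
  exact mem_support_iff.1 hs (by rw [← hcoeff, hp, coeff_zero])

theorem ker_eq_of_forall_exists_monomial_sub_mem [CommRing R]
    {φ : MvPolynomial σ R →ₐ[R] MvPolynomial τ R} {w : σ → τ →₀ ℕ}
    (hw : ∀ i, φ (X i) = monomial (w i) 1) {I : Ideal (MvPolynomial σ R)}
    (hI : I ≤ RingHom.ker φ) {S : Set (σ →₀ ℕ)}
    (hS : Set.InjOn (Finsupp.linearCombination ℕ w) S)
    (hnf : ∀ s, ∃ t ∈ S, monomial s (1 : R) - monomial t 1 ∈ I) :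
    RingHom.ker φ = I := by
  classical
  choose N hNS hN using hnf
  refine le_antisymm (fun p hp => ?_) hI
  set q := ∑ s ∈ p.support, monomial (N s) (coeff s p)
  have hpq : p - q ∈ I := by
    nth_rewrite 1 [p.as_sum]
    rw [← Finset.sum_sub_distrib]
    refine Ideal.sum_mem _ fun s _ => ?_
    rw [← mul_one (coeff s p), ← smul_eq_mul, ← smul_monomial, ← smul_monomial, ← smul_sub]
    exact I.smul_of_tower_mem _ (hN s)
  have hq : q = 0 := by
    refine eq_zero_of_algHom_eq_zero_of_injOn hw ?_ (hS.mono fun t ht => ?_)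
    · simpa [RingHom.mem_ker.1 hp] using hI hpq
    · obtain ⟨s, -, hs⟩ := Finset.mem_biUnion.1 (support_sum ht)
      rw [Finset.mem_singleton.1 (support_monomial_subset hs)]
      exact hNS s
  simpa [hq] using hpq

end MvPolynomial

theorem Nat.eq_and_eq_of_mul_add_mul_eq {a a' b b' c d : ℕ} (hc : 0 < c) (hd : 0 < d)
    (hb : b < Nat.lcm c d / d) (hb' : b' < Nat.lcm c d / d)
    (h : a * c + b * d = a' * c + b' * d) : a = a' ∧ b = b' := by
  have hlcm : Nat.lcm c d / d = c / Nat.gcd c d := by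
    rw [Nat.lcm, Nat.div_div_eq_div_mul, Nat.mul_div_mul_right _ _ hd]
  have hmod : b * d ≡ b' * d [MOD c] := by
    simpa [Nat.ModEq, Nat.add_mod] using congrArg (· % c) h
  have hbb' : b = b' := by
    rw [hlcm] at hb hb'
    exact (Nat.ModEq.cancel_right_div_gcd hc hmod).eq_of_lt_of_lt hb hb'
  subst hbb'
  exact ⟨Nat.eq_of_mul_eq_mul_right hc (Nat.add_right_cancel h), rfl⟩

section Toric

variable {A B : Type*} (K : Type*) [CommRing K] (c d : ℕ) (ι : B → A) (L : A)

noncomputable def toricExponent : A ⊕ B → A →₀ ℕ :=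
  Sum.elim (fun a => Finsupp.single a c) (fun b => Finsupp.single (ι b) d + Finsupp.single L d)

noncomputable def toricBinomial (b : B) : MvPolynomial (A ⊕ B) K :=
  X (Sum.inr b) ^ (Nat.lcm c d / d) -
    X (Sum.inl (ι b)) ^ (Nat.lcm c d / c) * X (Sum.inl L) ^ (Nat.lcm c d / c)

variable {K c d ι L}

theorem linearCombination_toricExponent_apply [Fintype A] [Fintype B] (s : A ⊕ B →₀ ℕ) (a : A) :
    Finsupp.linearCombination ℕ (toricExponent c d ι L) s a =
      s (Sum.inl a) * c + ∑ b, s (Sum.inr b) * (Finsupp.single (ι b) d + Finsupp.single L d) a := by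
  classical
  rw [Finsupp.linearCombination_apply, Finsupp.sum_apply, Finsupp.sum_fintype _ _ (by simp),
    Fintype.sum_sum_type]
  simp only [toricExponent, Sum.elim_inl, Sum.elim_inr, Finsupp.smul_apply, smul_eq_mul,
    Finsupp.single_apply, mul_ite, mul_zero, Finset.sum_ite_eq', Finset.mem_univ, if_true]

theorem linearCombination_toricExponent_apply_self [Fintype A] [Fintype B]
    (hι : Function.Injective ι) (hL : ∀ b, ι b ≠ L) (s : A ⊕ B →₀ ℕ) (b : B) :
    Finsupp.linearCombination ℕ (toricExponent c d ι L) s (ι b) =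
      s (Sum.inl (ι b)) * c + s (Sum.inr b) * d := by
  classical
  rw [linearCombination_toricExponent_apply]
  simp [Finsupp.single_apply, hι.eq_iff, Ne.symm (hL b)]

theorem injOn_linearCombination_toricExponent [Fintype A] [Fintype B] (hc : 0 < c) (hd : 0 < d)
    (hι : Function.Injective ι) (hL : ∀ b, ι b ≠ L) :
    Set.InjOn (Finsupp.linearCombination ℕ (toricExponent c d ι L))
      {s | ∀ b, s (Sum.inr b) < Nat.lcm c d / d} := by
  intro s hs t ht hst
  have hinr : ∀ b, s (Sum.inr b) = t (Sum.inr b) ∧ s (Sum.inl (ι b)) = t (Sum.inl (ι b)) := by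
    intro b
    have h := DFunLike.congr_fun hst (ι b)
    rw [linearCombination_toricExponent_apply_self hι hL,
      linearCombination_toricExponent_apply_self hι hL] at h
    exact (Nat.eq_and_eq_of_mul_add_mul_eq hc hd (hs b) (ht b) h).symm
  ext (a | b)
  · have h := DFunLike.congr_fun hst a
    simp only [linearCombination_toricExponent_apply, fun b => (hinr b).1] at h
    exact Nat.eq_of_mul_eq_mul_right hc (Nat.add_right_cancel h)
  · exact (hinr b).1

theorem toricBinomial_mem_ker {ψ : MvPolynomial (A ⊕ B) K →ₐ[K] MvPolynomial A K}
    (hψx : ∀ a, ψ (X (Sum.inl a)) = X a ^ c)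
    (hψy : ∀ b, ψ (X (Sum.inr b)) = X (ι b) ^ d * X L ^ d) (b : B) :
    toricBinomial K c d ι L b ∈ RingHom.ker ψ := by
  simp only [toricBinomial, RingHom.mem_ker, map_sub, map_mul, map_pow, hψx, hψy, mul_pow,
    ← pow_mul, Nat.mul_div_cancel' (Nat.dvd_lcm_left c d),
    Nat.mul_div_cancel' (Nat.dvd_lcm_right c d), sub_self]

theorem exists_monomial_sub_mem_span_toricBinomial (hc : 0 < c) (hd : 0 < d) (s : A ⊕ B →₀ ℕ) :
    ∃ t ∈ {t : A ⊕ B →₀ ℕ | ∀ b, t (Sum.inr b) < Nat.lcm c d / d},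
      monomial s (1 : K) - monomial t 1 ∈ Ideal.span (Set.range (toricBinomial K c d ι L)) := by
  classical
  set md := Nat.lcm c d / d
  set mc := Nat.lcm c d / c
  set J := Ideal.span (Set.range (toricBinomial K c d ι L))
  have hmd : 0 < md := Nat.div_pos (Nat.le_of_dvd (Nat.lcm_pos hc hd) (Nat.dvd_lcm_right c d)) hd
  -- `g v e` is the reduced exponent of `X v ^ e`, using `y_b ^ md ≡ (x_{ι b} * x_L) ^ mc`
  let g : A ⊕ B → ℕ → A ⊕ B →₀ ℕ := Sum.elim (fun a e => Finsupp.single (Sum.inl a) e)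
    fun b e => Finsupp.single (Sum.inr b) (e % md) +
      (e / md) • (Finsupp.single (Sum.inl (ι b)) mc + Finsupp.single (Sum.inl L) mc)
  have hg : ∀ v e, Ideal.Quotient.mk J (X v ^ e) = Ideal.Quotient.mk J (monomial (g v e) 1) := by
    rintro (a | b) e
    · simp [g, X_pow_eq_monomial]
    · have hgen : Ideal.Quotient.mk J (X (Sum.inr b) ^ md) =
          Ideal.Quotient.mk J (X (Sum.inl (ι b)) ^ mc * X (Sum.inl L) ^ mc) :=
        Ideal.Quotient.eq.2 (Ideal.subset_span ⟨b, rfl⟩)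
      have hmon : monomial (g (Sum.inr b) e) (1 : K) =
          X (Sum.inr b) ^ (e % md) * (X (Sum.inl (ι b)) ^ mc * X (Sum.inl L) ^ mc) ^ (e / md) := by
        simp only [g, Sum.elim_inr, X_pow_eq_monomial, monomial_mul, monomial_pow, one_pow,
          one_mul]
      rw [hmon, map_mul, map_pow _ _ (e / md), ← hgen, ← map_pow, ← map_mul, ← pow_mul,
        ← pow_add, Nat.mod_add_div]
  have hsum : ∀ b, s.sum g (Sum.inr b) = s (Sum.inr b) % md := by
    intro b
    rw [Finsupp.sum_apply, Finsupp.sum_eq_single (Sum.inr b)]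
    · simp [g]
    · rintro (a | b') - hb' <;> simp_all [g]
    · simp [g]
  refine ⟨s.sum g, fun b => hsum b ▸ Nat.mod_lt _ hmd, Ideal.Quotient.eq.1 ?_⟩
  rw [monomial_eq, monomial_finsupp_sum_index, C_1, one_mul, one_mul, map_finsuppProd,
    map_finsuppProd]
  exact Finsupp.prod_congr fun v _ => hg v (s v)

theorem ker_eq_span_toricBinomial [Fintype A] [Fintype B] (hc : 0 < c) (hd : 0 < d)
    (hι : Function.Injective ι) (hL : ∀ b, ι b ≠ L)
    (ψ : MvPolynomial (A ⊕ B) K →ₐ[K] MvPolynomial A K)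
    (hψx : ∀ a, ψ (X (Sum.inl a)) = X a ^ c)
    (hψy : ∀ b, ψ (X (Sum.inr b)) = X (ι b) ^ d * X L ^ d) :
    RingHom.ker ψ = Ideal.span (Set.range (toricBinomial K c d ι L)) := by
  have hw : ∀ v, ψ (X v) = monomial (toricExponent c d ι L v) 1 := by
    rintro (a | b)
    · rw [hψx, X_pow_eq_monomial]; rfl
    · rw [hψy, X_pow_eq_monomial, X_pow_eq_monomial, monomial_mul, one_mul]; rfl
  exact ker_eq_of_forall_exists_monomial_sub_mem hw
    (Ideal.span_le.2 (Set.range_subset_iff.2 (toricBinomial_mem_ker hψx hψy)))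
    (injOn_linearCombination_toricExponent hc hd hι hL)
    (exists_monomial_sub_mem_span_toricBinomial hc hd)

end Toric

/-- For `n ≥ 2`, positive `c, d`, `m = lcm(c,d)`, and distinct
`i₁, …, i_k ∈ {1, …, n-1}`, the kernel of the `K`-algebra homomorphism
`ψ : K[x₁,…,xₙ,y₁,…,y_k] → K[u₁,…,uₙ]` with `ψ(xⱼ) = uⱼ^c` and `ψ(yⱼ) = u_{i_j}^d·uₙ^d`
is generated by the `k` binomials `yⱼ^{m/d} − x_{i_j}^{m/c}·xₙ^{m/c}`. -/
theorem stmt1 (n k : ℕ) (hn : 2 ≤ n) (c d : ℕ) (hc : 0 < c) (hd : 0 < d)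
    (i : Fin k → Fin (n - 1)) (hinj : Function.Injective i)
    (K : Type*) [Field K]
    (ψ : MvPolynomial (Fin n ⊕ Fin k) K →ₐ[K] MvPolynomial (Fin n) K)
    (hψx : ∀ j : Fin n, ψ (X (Sum.inl j)) = X j ^ c)
    (hψy : ∀ j : Fin k, ψ (X (Sum.inr j)) =
      X (Fin.castLE (by omega) (i j)) ^ d * X (⟨n - 1, by omega⟩ : Fin n) ^ d) :
    RingHom.ker ψ =
      Ideal.span (Set.range fun j : Fin k =>
        (X (Sum.inr j) ^ (Nat.lcm c d / d) -
          X (Sum.inl (Fin.castLE (by omega) (i j))) ^ (Nat.lcm c d / c) *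
            X (Sum.inl (⟨n - 1, by omega⟩ : Fin n)) ^ (Nat.lcm c d / c) :
          MvPolynomial (Fin n ⊕ Fin k) K)) := by
  have hlast : ∀ j, Fin.castLE (by omega) (i j) ≠ (⟨n - 1, by omega⟩ : Fin n) := fun j h =>
    (i j).isLt.ne (by simpa using congrArg Fin.val h)
  exact ker_eq_span_toricBinomial hc hd ((Fin.castLE_injective _).comp hinj) hlast ψ hψx hψy
end

section
/- In ℤⁿ one has g·wₙ = (2g−f)·(v₁ + ⋯ + v_{n−1}) + (ng − (n−1)f)·vₙ + g(f−g)·(w₁ + ⋯ + w_{n−1}), all coefficients being nonnegative integers; in particular g·wₙ ∈ ℕT₁. -/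
/-- In the setting of the paper (`n ≥ 3`, coprime `f > g > 0`,
`(n-1)f ≤ ng`), one has
`g·wₙ = (2g−f)(v₁+⋯+v_{n-1}) + (ng−(n−1)f)·vₙ + g(f−g)(w₁+⋯+w_{n-1})` in `ℤⁿ`,
all coefficients being nonnegative; in particular `g·wₙ ∈ ℕT₁`. -/
theorem stmt4 (n : ℕ) (hn : 3 ≤ n) (f g : ℕ) (hco : Nat.Coprime f g)
    (hg : 0 < g) (hgf : g < f) (hng : (n - 1) * f ≤ n * g)
    (v : Fin n → Fin n → ℤ)
    (hv : ∀ i : Fin n, v i = Pi.single i ((f * g : ℕ) : ℤ))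
    (w : Fin (n - 1) → Fin n → ℤ)
    (hw : ∀ i : Fin (n - 1), w i = ((f : ℤ) - (g : ℤ)) •
      (Pi.single (Fin.castLE (by omega) i) (1 : ℤ) +
        Pi.single (⟨n - 1, by omega⟩ : Fin n) (1 : ℤ)))
    (wn : Fin n → ℤ)
    (hwn : wn = (g : ℤ) ^ 2 •
        (∑ i : Fin (n - 1), Pi.single (Fin.castLE (by omega) i) (1 : ℤ) : Fin n → ℤ) +
      ((g : ℤ) * (((n : ℤ) - 1) * (g : ℤ) - ((n : ℤ) - 2) * (f : ℤ))) •
        Pi.single (⟨n - 1, by omega⟩ : Fin n) (1 : ℤ)) :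
    (g : ℤ) • wn =
        (2 * (g : ℤ) - (f : ℤ)) • (∑ i : Fin (n - 1), v (Fin.castLE (by omega) i)) +
        ((n : ℤ) * (g : ℤ) - ((n : ℤ) - 1) * (f : ℤ)) • v ⟨n - 1, by omega⟩ +
        ((g : ℤ) * ((f : ℤ) - (g : ℤ))) • (∑ i : Fin (n - 1), w i) ∧
    0 ≤ 2 * (g : ℤ) - (f : ℤ) ∧
    0 ≤ (n : ℤ) * (g : ℤ) - ((n : ℤ) - 1) * (f : ℤ) ∧
    0 ≤ (g : ℤ) * ((f : ℤ) - (g : ℤ)) ∧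
    (g : ℤ) • wn ∈ AddSubmonoid.closure (Set.range v ∪ Set.range w) := by
  have hn1 : ((n - 1 : ℕ) : ℤ) = (n : ℤ) - 1 := by
    have : 1 ≤ n := by omega
    push_cast [this]; ring
  set S : Fin n → ℤ := ∑ i : Fin (n - 1), Pi.single (Fin.castLE (by omega) i) (1 : ℤ)
    with hS
  set T : Fin n → ℤ := Pi.single (⟨n - 1, by omega⟩ : Fin n) (1 : ℤ) with hT
  have hsingle : ∀ (j : Fin n) (c : ℤ), Pi.single j c = c • (Pi.single j (1 : ℤ) : Fin n → ℤ) := by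
    intro j c
    ext x
    simp [Pi.single_apply]
  have hvsum : (∑ i : Fin (n - 1), v (Fin.castLE (by omega) i)) = ((f : ℤ) * g) • S := by
    rw [hS, Finset.smul_sum]
    refine Finset.sum_congr rfl fun i _ => ?_
    rw [hv, hsingle]; push_cast; ring_nf
  have hvn : v ⟨n - 1, by omega⟩ = ((f : ℤ) * g) • T := by
    rw [hv, hT, ← hsingle]; push_cast; ring_nf
  have hwsum : (∑ i : Fin (n - 1), w i)
      = ((f : ℤ) - g) • (S + ((n : ℤ) - 1) • T) := by
    have : (∑ i : Fin (n - 1), w i)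
        = (∑ i : Fin (n - 1), ((f : ℤ) - g) •
            (Pi.single (Fin.castLE (by omega) i) (1 : ℤ) + T)) :=
      Finset.sum_congr rfl fun i _ => hw i
    rw [this, ← Finset.smul_sum, Finset.sum_add_distrib, ← hS,
      Finset.sum_const, Finset.card_univ, Fintype.card_fin, ← hn1, natCast_zsmul]
  have key : (g : ℤ) • wn =
        (2 * (g : ℤ) - (f : ℤ)) • (∑ i : Fin (n - 1), v (Fin.castLE (by omega) i)) +
        ((n : ℤ) * (g : ℤ) - ((n : ℤ) - 1) * (f : ℤ)) • v ⟨n - 1, by omega⟩ +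
        ((g : ℤ) * ((f : ℤ) - (g : ℤ))) • (∑ i : Fin (n - 1), w i) := by
    rw [hvsum, hvn, hwsum, hwn]
    module
  have hng' : ((n : ℤ) - 1) * f ≤ (n : ℤ) * g := by
    have := hng
    zify at this
    rwa [hn1] at this
  have h1 : 0 ≤ 2 * (g : ℤ) - f := by
    have hfg : (g : ℤ) < f := by exact_mod_cast hgf
    have hn3 : (3 : ℤ) ≤ n := by exact_mod_cast hn
    nlinarith
  have h2 : 0 ≤ (n : ℤ) * g - ((n : ℤ) - 1) * f := by linarith
  have h3 : 0 ≤ (g : ℤ) * ((f : ℤ) - g) := by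
    have hfg : (g : ℤ) < f := by exact_mod_cast hgf
    have : (0 : ℤ) ≤ g := by positivity
    nlinarith
  refine ⟨key, h1, h2, h3, ?_⟩
  rw [key]
  have hmem : ∀ (c : ℤ) (x : Fin n → ℤ), 0 ≤ c →
      x ∈ AddSubmonoid.closure (Set.range v ∪ Set.range w) →
      c • x ∈ AddSubmonoid.closure (Set.range v ∪ Set.range w) := by
    intro c x hc hx
    rw [← Int.toNat_of_nonneg hc, natCast_zsmul]
    exact AddSubmonoid.nsmul_mem _ hx _
  have hvmem : ∀ i : Fin n, v i ∈ AddSubmonoid.closure (Set.range v ∪ Set.range w) :=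
    fun i => AddSubmonoid.subset_closure (Or.inl ⟨i, rfl⟩)
  have hwmem : ∀ i : Fin (n - 1), w i ∈ AddSubmonoid.closure (Set.range v ∪ Set.range w) :=
    fun i => AddSubmonoid.subset_closure (Or.inr ⟨i, rfl⟩)
  refine AddSubmonoid.add_mem _ (AddSubmonoid.add_mem _ ?_ ?_) ?_
  · exact hmem _ _ h1 (AddSubmonoid.sum_mem _ fun i _ => hvmem _)
  · exact hmem _ _ h2 (hvmem _)
  · exact hmem _ _ h3 (AddSubmonoid.sum_mem _ fun i _ => hwmem _)
end

section
/- Let K be algebraically closed, let p and q be distinct primes, let α, s, t ∈ ℕ satisfy p^α = sf + tg and let β, s', t' ∈ ℕ satisfy q^β = s'f + t'g. Then the zero set in K^{2n} of ker φ equals the set of common zeros of the n+1 binomials F₁, …, F_{n−1}, F_{n,p}, F_{n,q}; that is, V is defined by the n+1 binomial equations F₁ = ⋯ = F_{n−1} = F_{n,p} = F_{n,q} = 0. -/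
open MvPolynomial

lemma aux_bezout (c N : ℕ) (hN : 1 < N) (h : Nat.Coprime c N) :
    ∃ a b : ℕ, c * a = N * b + 1 := by
  have ht : 0 < N.totient := Nat.totient_pos.mpr (by omega)
  have hmod : c ^ N.totient % N = 1 % N := Nat.ModEq.pow_totient h
  refine ⟨c ^ (N.totient - 1), c ^ N.totient / N, ?_⟩
  have hc : c * c ^ (N.totient - 1) = c ^ N.totient := by
    rw [← pow_succ']; congr 1; omega
  have h1 : c ^ N.totient % N = 1 := by rw [hmod]; exact Nat.one_mod_eq_one.mpr (by omega)
  rw [hc]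
  conv_lhs => rw [← Nat.div_add_mod (c ^ N.totient) N, h1]

lemma aux_eq_of_pow {K : Type*} [Field K] {y T : K} {P Q : ℕ} (hP : 0 < P) (hQ : 0 < Q)
    (hco : Nat.Coprime P Q) (h1 : y ^ P = T ^ P) (h2 : y ^ Q = T ^ Q) : y = T := by
  by_cases hT : T = 0
  · subst hT
    simpa [zero_pow hP.ne', pow_eq_zero_iff hP.ne'] using h1
  · have hz1 : (y / T) ^ P = 1 := by rw [div_pow, h1, div_self (pow_ne_zero _ hT)]
    have hz2 : (y / T) ^ Q = 1 := by rw [div_pow, h2, div_self (pow_ne_zero _ hT)]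
    have hd : orderOf (y / T) ∣ 1 :=
      hco ▸ Nat.dvd_gcd (orderOf_dvd_of_pow_eq_one hz1) (orderOf_dvd_of_pow_eq_one hz2)
    have hone : y / T = 1 := orderOf_eq_one_iff.mp (Nat.dvd_one.mp hd)
    field_simp at hone
    exact hone

lemma aux_adjust {K : Type*} [Field K] [IsAlgClosed K] (c N : ℕ) (hN : 1 < N)
    (hc : Nat.Coprime c N) (x y v : K) (hy : y ^ N = x ^ c * (v ^ N) ^ c) :
    ∃ w : K, w ^ N = x ∧ w ^ c * v ^ c = y := by
  obtain ⟨w0, hw0⟩ := IsAlgClosed.exists_pow_nat_eq x (n := N) (by omega)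
  set D := w0 ^ c * v ^ c with hD
  have hDN : D ^ N = y ^ N := by
    rw [hy, hD, mul_pow, ← pow_mul, ← pow_mul, mul_comm c N, pow_mul, pow_mul, hw0]
  by_cases hD0 : D = 0
  · refine ⟨w0, hw0, ?_⟩
    have hyN : y ^ N = 0 := by rw [← hDN, hD0, zero_pow (by omega : N ≠ 0)]
    have hy0 : y = 0 := pow_eq_zero_iff (by omega : N ≠ 0) |>.mp hyN
    rw [← hD, hD0, hy0]
  · obtain ⟨a, b, hab⟩ := aux_bezout c N hN hc
    set z := y / D with hz
    have hzN : z ^ N = 1 := by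
      rw [hz, div_pow, hDN, div_self (pow_ne_zero _ ?_)]
      intro h0
      exact hD0 (pow_eq_zero_iff (by omega : N ≠ 0) |>.mp
        (hDN.trans (by rw [h0, zero_pow (by omega : N ≠ 0)])))
    refine ⟨z ^ a * w0, ?_, ?_⟩
    · rw [mul_pow, ← pow_mul, mul_comm a N, pow_mul, hzN, one_pow, one_mul, hw0]
    · have hstep : (z ^ a * w0) ^ c * v ^ c = z ^ (a * c) * D := by
        rw [hD]; ring
      rw [hstep, mul_comm a c, hab, pow_succ, pow_mul, hzN, one_pow, one_mul, hz,
        div_mul_cancel₀ _ hD0]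

lemma aux_pow {R : Type*} [CommMonoid R] {m : ℕ} (w : Fin m → R) (v : R)
    (N c E1 E2 E3 G2 GA P : ℕ)
    (h1 : N * E1 + c * E3 = G2 * P)
    (h2 : N * E2 + m * (c * E3) = GA * P) :
    (∏ i, w i ^ N) ^ E1 * (v ^ N) ^ E2 * (∏ i, w i ^ c * v ^ c) ^ E3
      = ((∏ i, w i ^ G2) * v ^ GA) ^ P := by
  have hW : ∀ e : ℕ, (∏ i, w i ^ e) = (∏ i, w i) ^ e := fun e => Finset.prod_pow _ _ _
  have hprod : (∏ i, w i ^ c * v ^ c) = (∏ i, w i) ^ c * v ^ (m * c) := by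
    rw [Finset.prod_mul_distrib, hW, Finset.prod_const, Finset.card_univ, Fintype.card_fin,
      ← pow_mul, mul_comm c m]
  rw [hW, hW, hprod]
  set W := ∏ i, w i
  calc (W ^ N) ^ E1 * (v ^ N) ^ E2 * (W ^ c * v ^ (m * c)) ^ E3
      = (W ^ (N * E1) * W ^ (c * E3)) * (v ^ (N * E2) * v ^ ((m * c) * E3)) := by
        rw [mul_pow, ← pow_mul, ← pow_mul, ← pow_mul, ← pow_mul]
        exact mul_mul_mul_comm _ _ _ _
    _ = W ^ (N * E1 + c * E3) * v ^ (N * E2 + m * (c * E3)) := by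
        rw [← pow_add, ← pow_add, Nat.mul_assoc]
    _ = W ^ (G2 * P) * v ^ (GA * P) := by rw [h1, h2]
    _ = (W ^ G2 * v ^ GA) ^ P := by rw [mul_pow, pow_mul, pow_mul]

lemma aux_arith (n f g s t : ℕ) (hn : 3 ≤ n) (hgf : g < f) (hng : (n - 1) * f ≤ n * g) :
    (f * g) * (s * g + t * (2 * g - f)) + (f - g) * (t * g * (f - g)) = g ^ 2 * (s * f + t * g)
    ∧ (f * g) * (s * ((n - 1) * g - (n - 2) * f) + t * (n * g - (n - 1) * f))
        + (n - 1) * ((f - g) * (t * g * (f - g)))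
      = (g * ((n - 1) * g - (n - 2) * f)) * (s * f + t * g) := by
  obtain ⟨k, rfl⟩ : ∃ k, n = k + 3 := ⟨n - 3, by omega⟩
  obtain ⟨cc, rfl⟩ : ∃ cc, f = g + cc := ⟨f - g, by omega⟩
  have e1 : k + 3 - 1 = k + 2 := by omega
  have e2 : k + 3 - 2 = k + 1 := by omega
  rw [e1] at hng ⊢
  rw [e2]
  have hM : (k + 2) * cc ≤ g := by nlinarith [hng]
  obtain ⟨B, hgB⟩ : ∃ B, g = B + (k + 2) * cc := ⟨g - (k + 2) * cc, by omega⟩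
  have sub1 : g + cc - g = cc := by omega
  have sub2 : 2 * g - (g + cc) = B + (k + 1) * cc :=
    Nat.sub_eq_of_eq_add (by rw [hgB]; ring)
  have sub3 : (k + 2) * g - (k + 1) * (g + cc) = B + cc :=
    Nat.sub_eq_of_eq_add (by rw [hgB]; ring)
  have sub4 : (k + 3) * g - (k + 2) * (g + cc) = B :=
    Nat.sub_eq_of_eq_add (by rw [hgB]; ring)
  rw [sub1, sub2, sub3, sub4, hgB]
  constructor <;> ring

/-- In the setting of the paper (`n ≥ 3`, coprime `f > g > 0`,
`(n-1)f ≤ ng`), let `K` be algebraically closed, `p ≠ q` primes with `p^α = sf + tg` and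
`q^β = s'f + t'g`. The zero set in `K^{2n}` of `ker φ` equals the set of common zeros of
the `n+1` binomials `F₁, …, F_{n-1}, F_{n,p}, F_{n,q}`. -/
theorem stmt12 (n : ℕ) (hn : 3 ≤ n) (f g : ℕ) (hco : Nat.Coprime f g)
    (hg : 0 < g) (hgf : g < f) (hng : (n - 1) * f ≤ n * g)
    (K : Type*) [Field K] [IsAlgClosed K]
    (p q : ℕ) (hp : p.Prime) (hq : q.Prime) (hpq : p ≠ q)
    (α s t : ℕ) (hpst : p ^ α = s * f + t * g)
    (β s' t' : ℕ) (hqst : q ^ β = s' * f + t' * g)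
    (φ : MvPolynomial (Fin n ⊕ Fin n) K →ₐ[K] MvPolynomial (Fin n) K)
    (hφx : ∀ i : Fin n, φ (X (Sum.inl i)) = X i ^ (f * g))
    (hφy : ∀ i : Fin (n - 1), φ (X (Sum.inr (Fin.castLE (by omega) i))) =
      X (Fin.castLE (by omega) i : Fin n) ^ (f - g) * X (⟨n - 1, by omega⟩ : Fin n) ^ (f - g))
    (hφyn : φ (X (Sum.inr (⟨n - 1, by omega⟩ : Fin n))) =
      (∏ i : Fin (n - 1), X (Fin.castLE (by omega) i : Fin n) ^ g ^ 2) *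
        X (⟨n - 1, by omega⟩ : Fin n) ^ (g * ((n - 1) * g - (n - 2) * f))) :
    {a : Fin n ⊕ Fin n → K | ∀ F ∈ RingHom.ker φ, eval a F = 0} =
    {a : Fin n ⊕ Fin n → K |
      (∀ i : Fin (n - 1),
        eval a (X (Sum.inr (Fin.castLE (by omega) i : Fin n)) ^ (f * g) -
          X (Sum.inl (Fin.castLE (by omega) i : Fin n)) ^ (f - g) *
            X (Sum.inl (⟨n - 1, by omega⟩ : Fin n)) ^ (f - g) :
          MvPolynomial (Fin n ⊕ Fin n) K) = 0) ∧
      eval a (X (Sum.inr (⟨n - 1, by omega⟩ : Fin n)) ^ (p ^ α) -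
        (∏ i : Fin (n - 1), X (Sum.inl (Fin.castLE (by omega) i : Fin n))) ^
            (s * g + t * (2 * g - f)) *
          X (Sum.inl (⟨n - 1, by omega⟩ : Fin n)) ^
            (s * ((n - 1) * g - (n - 2) * f) + t * (n * g - (n - 1) * f)) *
          (∏ i : Fin (n - 1), X (Sum.inr (Fin.castLE (by omega) i : Fin n))) ^
            (t * g * (f - g)) :
        MvPolynomial (Fin n ⊕ Fin n) K) = 0 ∧
      eval a (X (Sum.inr (⟨n - 1, by omega⟩ : Fin n)) ^ (q ^ β) -
        (∏ i : Fin (n - 1), X (Sum.inl (Fin.castLE (by omega) i : Fin n))) ^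
            (s' * g + t' * (2 * g - f)) *
          X (Sum.inl (⟨n - 1, by omega⟩ : Fin n)) ^
            (s' * ((n - 1) * g - (n - 2) * f) + t' * (n * g - (n - 1) * f)) *
          (∏ i : Fin (n - 1), X (Sum.inr (Fin.castLE (by omega) i : Fin n))) ^
            (t' * g * (f - g)) :
        MvPolynomial (Fin n ⊕ Fin n) K) = 0} := by
  have hN1 : 1 < f * g := by
    have := Nat.mul_le_mul (show 2 ≤ f by omega) (show 1 ≤ g by omega)
    omega
  have harP := aux_arith n f g s t hn hgf hng
  have harQ := aux_arith n f g s' t' hn hgf hng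
  ext a
  simp only [Set.mem_setOf_eq]
  constructor
  · -- forward: a vanishes on ker φ ⇒ binomials (which lie in ker φ) vanish
    intro hA
    refine ⟨fun i => hA _ ?_, hA _ ?_, hA _ ?_⟩
    · rw [RingHom.mem_ker, map_sub, map_pow, map_mul, map_pow, map_pow, hφy i, hφx, hφx,
        sub_eq_zero, mul_pow, ← pow_mul, ← pow_mul, ← pow_mul, ← pow_mul,
        Nat.mul_comm (f - g) (f * g)]
    · rw [RingHom.mem_ker, map_sub, map_pow, map_mul, map_mul, map_pow, map_pow, map_pow,
        map_prod, map_prod, hφyn, sub_eq_zero]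
      simp only [hφx, hφy]
      exact (aux_pow (fun i : Fin (n - 1) => X (Fin.castLE (by omega) i : Fin n)) _
        (f * g) (f - g) _ _ _ (g ^ 2) _ (p ^ α)
        (harP.1.trans (by rw [hpst])) (harP.2.trans (by rw [hpst]))).symm
    · rw [RingHom.mem_ker, map_sub, map_pow, map_mul, map_mul, map_pow, map_pow, map_pow,
        map_prod, map_prod, hφyn, sub_eq_zero]
      simp only [hφx, hφy]
      exact (aux_pow (fun i : Fin (n - 1) => X (Fin.castLE (by omega) i : Fin n)) _
        (f * g) (f - g) _ _ _ (g ^ 2) _ (q ^ β)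
        (harQ.1.trans (by rw [hqst])) (harQ.2.trans (by rw [hqst]))).symm
  · -- backward
    rintro ⟨h1, h2, h3⟩
    simp only [map_sub, map_pow, map_mul, map_prod, eval_X, sub_eq_zero] at h1 h2 h3
    -- coprimality of f-g and f*g
    have hc1 : (f - g).Coprime g := (Nat.coprime_sub_self_left hgf.le).mpr hco
    have hc2 : (f - g).Coprime f := by
      have hsub : f - (f - g) = g := by omega
      exact ((Nat.coprime_sub_self_left (Nat.sub_le f g)).mp
        (by rw [hsub]; exact hc1.symm)).symm
    have hcfg : Nat.Coprime (f - g) (f * g) := Nat.Coprime.mul_right hc2 hc1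
    obtain ⟨v, hv⟩ := IsAlgClosed.exists_pow_nat_eq
      (a (Sum.inl (⟨n - 1, by omega⟩ : Fin n))) (n := f * g) (by omega)
    choose w hw1 hw2 using fun i : Fin (n - 1) =>
      aux_adjust (f - g) (f * g) hN1 hcfg (a (Sum.inl (Fin.castLE (by omega) i : Fin n)))
        (a (Sum.inr (Fin.castLE (by omega) i : Fin n))) v (by rw [hv]; exact h1 i)
    set T : K := (∏ i : Fin (n - 1), w i ^ g ^ 2) *
      v ^ (g * ((n - 1) * g - (n - 2) * f)) with hT
    have hTP : a (Sum.inr (⟨n - 1, by omega⟩ : Fin n)) ^ p ^ α = T ^ p ^ α := by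
      rw [h2, ← hv]
      simp only [← hw1, ← hw2]
      exact aux_pow w v (f * g) (f - g) _ _ _ (g ^ 2) _ (p ^ α)
        (harP.1.trans (by rw [hpst])) (harP.2.trans (by rw [hpst]))
    have hTQ : a (Sum.inr (⟨n - 1, by omega⟩ : Fin n)) ^ q ^ β = T ^ q ^ β := by
      rw [h3, ← hv]
      simp only [← hw1, ← hw2]
      exact aux_pow w v (f * g) (f - g) _ _ _ (g ^ 2) _ (q ^ β)
        (harQ.1.trans (by rw [hqst])) (harQ.2.trans (by rw [hqst]))
    have ym_eq : a (Sum.inr (⟨n - 1, by omega⟩ : Fin n)) = T :=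
      aux_eq_of_pow (pow_pos hp.pos α) (pow_pos hq.pos β)
        (Nat.Coprime.pow α β ((Nat.coprime_primes hp hq).mpr hpq)) hTP hTQ
    -- build the point u
    set u : Fin n → K := fun j => if h : (j : ℕ) < n - 1 then w ⟨j, h⟩ else v with hu
    have hum : u (⟨n - 1, by omega⟩ : Fin n) = v := dif_neg (lt_irrefl (n - 1))
    have huc : ∀ i : Fin (n - 1), u (Fin.castLE (by omega) i : Fin n) = w i := by
      intro i
      have hlt : ((Fin.castLE (by omega) i : Fin n) : ℕ) < n - 1 := i.isLt
      rw [hu]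
      simp only []
      rw [dif_pos hlt]
      rfl
    have key : (eval a : MvPolynomial (Fin n ⊕ Fin n) K →+* K)
        = (eval u).comp (φ : MvPolynomial (Fin n ⊕ Fin n) K →+* MvPolynomial (Fin n) K) := by
      apply MvPolynomial.ringHom_ext
      · intro r
        simp [← MvPolynomial.algebraMap_eq]
      · rintro (j | j)
        · -- x-variables
          simp only [RingHom.comp_apply, RingHom.coe_coe, hφx j, eval_X, map_pow]
          by_cases hj : (j : ℕ) < n - 1
          · have hji : j = (Fin.castLE (by omega) (⟨j, hj⟩ : Fin (n - 1)) : Fin n) :=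
              Fin.ext rfl
            rw [hji, huc, hw1]
          · have hjm : j = (⟨n - 1, by omega⟩ : Fin n) := Fin.ext (show (j : ℕ) = n - 1 by have := j.isLt; omega)
            rw [hjm, hum, hv]
        · -- y-variables
          by_cases hj : (j : ℕ) < n - 1
          · have hji : j = (Fin.castLE (by omega) (⟨j, hj⟩ : Fin (n - 1)) : Fin n) :=
              Fin.ext rfl
            rw [hji]
            simp only [RingHom.comp_apply, RingHom.coe_coe, hφy ⟨j, hj⟩, eval_X, map_mul,
              map_pow, huc, hum]
            exact (hw2 ⟨j, hj⟩).symm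
          · have hjm : j = (⟨n - 1, by omega⟩ : Fin n) := Fin.ext (show (j : ℕ) = n - 1 by have := j.isLt; omega)
            rw [hjm]
            simp only [RingHom.comp_apply, RingHom.coe_coe, hφyn, eval_X, map_mul, map_pow,
              map_prod, huc, hum]
            rw [ym_eq, hT]
    intro F hF
    have hF0 : φ F = 0 := RingHom.mem_ker.mp hF
    have := DFunLike.congr_fun key F
    rw [this, RingHom.comp_apply, RingHom.coe_coe, hF0, map_zero]
end

section
/- Let K be a field of characteristic zero and let φ : K[x₁,x₂,x₃,y₁,y₂,y₃] → K[u₁,u₂,u₃] be the K-algebra homomorphism with φ(x₁) = u₁⁶, φ(x₂) = u₂⁶, φ(x₃) = u₃⁶, φ(y₁) = u₁u₃, φ(y₂) = u₂u₃, φ(y₃) = u₁⁴u₂⁴u₃². Then ker φ is generated by the six binomials y₁⁶ − x₁x₃, y₂⁶ − x₂x₃, y₃² − x₁x₂y₁²y₂², y₁⁴y₂⁴ − x₃y₃, y₁²y₃ − x₁y₂⁴, and y₂²y₃ − x₂y₁⁴, and it cannot be generated by fewer than six binomials. -/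
open MvPolynomial

/-- A binomial: the difference of two distinct monic monomials. -/
def IsBinomial {σ : Type*} {K : Type*} [CommRing K] (F : MvPolynomial σ K) : Prop :=
  ∃ a b : σ →₀ ℕ, a ≠ b ∧ F = monomial a (1 : K) - monomial b (1 : K)

namespace S16

noncomputable def vec (p q r a b c : ℕ) : Fin 3 ⊕ Fin 3 →₀ ℕ :=
  Finsupp.equivFunOnFinite.symm (Sum.elim ![p, q, r] ![a, b, c])

noncomputable def deg3 (d1 d2 d3 : ℕ) : Fin 3 →₀ ℕ :=
  Finsupp.equivFunOnFinite.symm ![d1, d2, d3]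

@[simp] lemma vec_x0 (p q r a b c : ℕ) : vec p q r a b c (Sum.inl 0) = p := rfl
@[simp] lemma vec_x1 (p q r a b c : ℕ) : vec p q r a b c (Sum.inl 1) = q := rfl
@[simp] lemma vec_x2 (p q r a b c : ℕ) : vec p q r a b c (Sum.inl 2) = r := rfl
@[simp] lemma vec_y0 (p q r a b c : ℕ) : vec p q r a b c (Sum.inr 0) = a := rfl
@[simp] lemma vec_y1 (p q r a b c : ℕ) : vec p q r a b c (Sum.inr 1) = b := rfl
@[simp] lemma vec_y2 (p q r a b c : ℕ) : vec p q r a b c (Sum.inr 2) = c := rfl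
@[simp] lemma deg3_0 (d1 d2 d3 : ℕ) : deg3 d1 d2 d3 0 = d1 := rfl
@[simp] lemma deg3_1 (d1 d2 d3 : ℕ) : deg3 d1 d2 d3 1 = d2 := rfl
@[simp] lemma deg3_2 (d1 d2 d3 : ℕ) : deg3 d1 d2 d3 2 = d3 := rfl

lemma vec_self (v : Fin 3 ⊕ Fin 3 →₀ ℕ) :
    v = vec (v (Sum.inl 0)) (v (Sum.inl 1)) (v (Sum.inl 2))
          (v (Sum.inr 0)) (v (Sum.inr 1)) (v (Sum.inr 2)) := by
  ext i; rcases i with i | i <;> fin_cases i <;> simp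

lemma vec_inj {p q r a b c p' q' r' a' b' c' : ℕ} :
    vec p q r a b c = vec p' q' r' a' b' c' ↔
      p = p' ∧ q = q' ∧ r = r' ∧ a = a' ∧ b = b' ∧ c = c' := by
  constructor
  · intro h
    exact ⟨congrArg (fun f => f (Sum.inl 0)) h, congrArg (fun f => f (Sum.inl 1)) h,
      congrArg (fun f => f (Sum.inl 2)) h, congrArg (fun f => f (Sum.inr 0)) h,
      congrArg (fun f => f (Sum.inr 1)) h, congrArg (fun f => f (Sum.inr 2)) h⟩
  · rintro ⟨rfl, rfl, rfl, rfl, rfl, rfl⟩; rfl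

lemma deg3_inj {d1 d2 d3 e1 e2 e3 : ℕ} :
    deg3 d1 d2 d3 = deg3 e1 e2 e3 ↔ d1 = e1 ∧ d2 = e2 ∧ d3 = e3 := by
  constructor
  · intro h
    exact ⟨congrArg (fun f => f 0) h, congrArg (fun f => f 1) h, congrArg (fun f => f 2) h⟩
  · rintro ⟨rfl, rfl, rfl⟩; rfl

lemma vec_add (p q r a b c p' q' r' a' b' c' : ℕ) :
    vec p q r a b c + vec p' q' r' a' b' c' =
      vec (p + p') (q + q') (r + r') (a + a') (b + b') (c + c') := by
  ext i; rcases i with i | i <;> fin_cases i <;> simp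

/-- The multidegree map induced by `φ`. -/
noncomputable def A (v : Fin 3 ⊕ Fin 3 →₀ ℕ) : Fin 3 →₀ ℕ :=
  deg3 (6 * v (Sum.inl 0) + v (Sum.inr 0) + 4 * v (Sum.inr 2))
       (6 * v (Sum.inl 1) + v (Sum.inr 1) + 4 * v (Sum.inr 2))
       (6 * v (Sum.inl 2) + v (Sum.inr 0) + v (Sum.inr 1) + 2 * v (Sum.inr 2))

lemma A_vec (p q r a b c : ℕ) :
    A (vec p q r a b c) = deg3 (6*p + a + 4*c) (6*q + b + 4*c) (6*r + a + b + 2*c) := by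
  simp [A]

lemma A_add (u v : Fin 3 ⊕ Fin 3 →₀ ℕ) : A (u + v) = A u + A v := by
  ext j; fin_cases j <;> simp [A, deg3] <;> ring

lemma A_zero : A (0 : Fin 3 ⊕ Fin 3 →₀ ℕ) = 0 := by
  ext j; fin_cases j <;> simp [A, deg3]

noncomputable def μ : Fin 3 ⊕ Fin 3 → (Fin 3 →₀ ℕ)
  | .inl 0 => deg3 6 0 0
  | .inl 1 => deg3 0 6 0
  | .inl 2 => deg3 0 0 6
  | .inr 0 => deg3 1 0 1
  | .inr 1 => deg3 0 1 1
  | .inr 2 => deg3 4 4 2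

lemma A_single (i : Fin 3 ⊕ Fin 3) (n : ℕ) : A (Finsupp.single i n) = n • μ i := by
  ext j
  rcases i with i | i <;> fin_cases i <;> fin_cases j <;>
    simp [A, μ, deg3, Finsupp.single_apply] <;> ring

/-- The six pairs of monomial exponents. -/
noncomputable def P : Fin 6 → (Fin 3 ⊕ Fin 3 →₀ ℕ)
  | 0 => vec 0 0 0 6 0 0
  | 1 => vec 0 0 0 0 6 0
  | 2 => vec 0 0 0 0 0 2
  | 3 => vec 0 0 0 4 4 0
  | 4 => vec 0 0 0 2 0 1
  | 5 => vec 0 0 0 0 2 1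

noncomputable def Q : Fin 6 → (Fin 3 ⊕ Fin 3 →₀ ℕ)
  | 0 => vec 1 0 1 0 0 0
  | 1 => vec 0 1 1 0 0 0
  | 2 => vec 1 1 0 2 2 0
  | 3 => vec 0 0 1 0 0 1
  | 4 => vec 1 0 0 0 4 0
  | 5 => vec 0 1 0 4 0 0

lemma APQ (j : Fin 6) : A (P j) = A (Q j) := by
  fin_cases j <;> simp [P, Q, A_vec]

/-- Fibers of the six special degrees contain exactly two monomials. -/
lemma fiber (j : Fin 6) (v : Fin 3 ⊕ Fin 3 →₀ ℕ) (h : A v = A (P j)) :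
    v = P j ∨ v = Q j := by
  rw [vec_self v] at h ⊢
  fin_cases j <;>
  · simp only [P, Q] at h ⊢
    rw [A_vec, A_vec, deg3_inj] at h
    rw [vec_inj, vec_inj]
    rcases (show v (Sum.inr 2) = 0 ∨ v (Sum.inr 2) = 1 ∨ v (Sum.inr 2) = 2 by omega)
      with hc | hc | hc <;> omega

lemma Pdisj (j : Fin 6) (x : Fin 3 ⊕ Fin 3) : P j x = 0 ∨ Q j x = 0 := by
  fin_cases j <;> rcases x with x | x <;> fin_cases x <;> simp [P, Q]

lemma PQ_ne (j : Fin 6) : P j ≠ Q j := by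
  fin_cases j <;> simp [P, Q, vec_inj]

lemma P_ne_Q (j j' : Fin 6) : P j ≠ Q j' := by
  fin_cases j <;> fin_cases j' <;> simp [P, Q, vec_inj]

lemma P_injective (j j' : Fin 6) (h : P j = P j') : j = j' := by
  fin_cases j <;> fin_cases j' <;> simp_all [P, vec_inj]


lemma monomial_vec {K : Type*} [Field K] (p q r a b c : ℕ) :
    (monomial (vec p q r a b c) (1:K)) =
      X (Sum.inl 0) ^ p * X (Sum.inl 1) ^ q * X (Sum.inl 2) ^ r *
      X (Sum.inr 0) ^ a * X (Sum.inr 1) ^ b * X (Sum.inr 2) ^ c := by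
  rw [X_pow_eq_monomial, X_pow_eq_monomial, X_pow_eq_monomial, X_pow_eq_monomial,
    X_pow_eq_monomial, X_pow_eq_monomial, monomial_mul, monomial_mul, monomial_mul,
    monomial_mul, monomial_mul]
  norm_num
  ext i; rcases i with i | i <;> fin_cases i <;>
    simp [vec, Finsupp.single_apply]

lemma monomial_deg3 {K : Type*} [Field K] (d1 d2 d3 : ℕ) :
    (monomial (deg3 d1 d2 d3) (1:K)) = X 0 ^ d1 * X 1 ^ d2 * X 2 ^ d3 := by
  rw [X_pow_eq_monomial, X_pow_eq_monomial, X_pow_eq_monomial, monomial_mul, monomial_mul]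
  norm_num
  ext i; fin_cases i <;> simp [deg3, Finsupp.single_apply]

/-- Weighted measure for termination of the rewriting. -/
def W (v : Fin 3 ⊕ Fin 3 →₀ ℕ) : ℕ := v (Sum.inr 0) + v (Sum.inr 1) + 5 * v (Sum.inr 2)

@[simp] lemma W_vec (p q r a b c : ℕ) : W (vec p q r a b c) = a + b + 5 * c := rfl

/-- Normal form of a multidegree. -/
noncomputable def N (e : Fin 3 →₀ ℕ) : Fin 3 ⊕ Fin 3 →₀ ℕ :=
  if 4 ≤ e 0 % 6 ∧ 4 ≤ e 1 % 6 then
    vec (e 0 / 6) (e 1 / 6) ((e 2 - (e 0 % 6 - 4) - (e 1 % 6 - 4) - 2) / 6)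
      (e 0 % 6 - 4) (e 1 % 6 - 4) 1
  else
    vec (e 0 / 6) (e 1 / 6) ((e 2 - e 0 % 6 - e 1 % 6) / 6) (e 0 % 6) (e 1 % 6) 0

section Field
variable {K : Type*} [Field K]

/-- The six binomial generators. -/
noncomputable def g (K : Type*) [Field K] (j : Fin 6) : MvPolynomial (Fin 3 ⊕ Fin 3) K :=
  monomial (P j) (1 : K) - monomial (Q j) (1 : K)

lemma gmem (j : Fin 6) : g K j ∈ Ideal.span (Set.range (g K)) :=
  Ideal.subset_span ⟨j, rfl⟩

lemma step (w : Fin 3 ⊕ Fin 3 →₀ ℕ) (j : Fin 6) :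
    monomial (w + P j) (1:K) - monomial (w + Q j) 1 ∈ Ideal.span (Set.range (g K)) := by
  have h : monomial (w + P j) (1:K) - monomial (w + Q j) 1 = monomial w 1 * g K j := by
    rw [g, mul_sub, monomial_mul, monomial_mul, one_mul]
  rw [h]
  exact Ideal.mul_mem_left _ _ (gmem j)

lemma N_A_normal (p q r a b c : ℕ)
    (h : (c = 0 ∧ a ≤ 5 ∧ b ≤ 5 ∧ ¬(4 ≤ a ∧ 4 ≤ b)) ∨ (c = 1 ∧ a ≤ 1 ∧ b ≤ 1)) :
    N (A (vec p q r a b c)) = vec p q r a b c := by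
  rw [A_vec, N]
  rw [deg3_0, deg3_1, deg3_2]
  split_ifs with hc
  · rw [vec_inj]; omega
  · rw [vec_inj]; omega

/-- Key reduction lemma: every monomial is congruent to its normal form modulo the ideal. -/
lemma monomial_sub_nf_mem (v : Fin 3 ⊕ Fin 3 →₀ ℕ) :
    monomial v (1:K) - monomial (N (A v)) 1 ∈ Ideal.span (Set.range (g K)) := by
  suffices H : ∀ n v, W v = n →
      monomial v (1:K) - monomial (N (A v)) 1 ∈ Ideal.span (Set.range (g K)) from
    H (W v) v rfl
  intro n
  induction n using Nat.strong_induction_on with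
  | _ n ih =>
    intro v hW
    obtain ⟨p, q, r, a, b, c, rfl⟩ : ∃ p q r a b c, v = vec p q r a b c :=
      ⟨_, _, _, _, _, _, vec_self v⟩
    rw [W_vec] at hW
    by_cases hnorm : (c = 0 ∧ a ≤ 5 ∧ b ≤ 5 ∧ ¬(4 ≤ a ∧ 4 ≤ b)) ∨ (c = 1 ∧ a ≤ 1 ∧ b ≤ 1)
    · rw [N_A_normal p q r a b c hnorm, sub_self]
      exact Ideal.zero_mem _
    · -- one of the six rewrite rules applies
      have hcases : (2 ≤ c) ∨ (c = 1 ∧ 2 ≤ a) ∨ (c = 1 ∧ 2 ≤ b) ∨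
          (c = 0 ∧ 6 ≤ a) ∨ (c = 0 ∧ 6 ≤ b) ∨ (c = 0 ∧ 4 ≤ a ∧ 4 ≤ b) := by omega
      -- uniform handler
      have descend : ∀ (w : Fin 3 ⊕ Fin 3 →₀ ℕ) (j : Fin 6),
          vec p q r a b c = w + P j → W (w + Q j) < n →
          monomial (vec p q r a b c) (1:K) - monomial (N (A (vec p q r a b c))) 1 ∈
            Ideal.span (Set.range (g K)) := by
        intro w j h1 h2
        have hA : A (w + Q j) = A (vec p q r a b c) := by
          rw [h1, A_add, A_add, APQ]
        have htail := ih (W (w + Q j)) (by omega) (w + Q j) rfl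
        rw [hA] at htail
        have hstep : monomial (vec p q r a b c) (1:K) - monomial (w + Q j) 1 ∈
            Ideal.span (Set.range (g K)) := by
          rw [h1]; exact step w j
        have := Ideal.add_mem _ hstep htail
        simpa using this
      rcases hcases with hc | ⟨hc, ha⟩ | ⟨hc, hb⟩ | ⟨hc, ha⟩ | ⟨hc, hb⟩ | ⟨hc, ha, hb⟩
      · exact descend (vec p q r a b (c-2)) 2
          (by simp [P, vec_add, vec_inj]; omega)
          (by simp [Q, vec_add]; omega)
      · exact descend (vec p q r (a-2) b (c-1)) 4
          (by simp [P, vec_add, vec_inj]; omega)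
          (by simp [Q, vec_add]; omega)
      · exact descend (vec p q r a (b-2) (c-1)) 5
          (by simp [P, vec_add, vec_inj]; omega)
          (by simp [Q, vec_add]; omega)
      · exact descend (vec p q r (a-6) b c) 0
          (by simp [P, vec_add, vec_inj]; omega)
          (by simp [Q, vec_add]; omega)
      · exact descend (vec p q r a (b-6) c) 1
          (by simp [P, vec_add, vec_inj]; omega)
          (by simp [Q, vec_add]; omega)
      · exact descend (vec p q r (a-4) (b-4) c) 3
          (by simp [P, vec_add, vec_inj]; omega)
          (by simp [Q, vec_add]; omega)

variable (φ : MvPolynomial (Fin 3 ⊕ Fin 3) K →ₐ[K] MvPolynomial (Fin 3) K)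
variable (hX : ∀ i, φ (X i) = monomial (μ i) (1:K))

include hX in
lemma phi_monomial (v : Fin 3 ⊕ Fin 3 →₀ ℕ) (k : K) :
    φ (monomial v k) = monomial (A v) k := by
  induction v using Finsupp.induction with
  | zero => rw [A_zero, monomial_zero', monomial_zero']; exact φ.commutes k
  | single_add a n f _ _ ih =>
      have h1 : monomial (Finsupp.single a n + f) k
          = monomial (Finsupp.single a n) (1:K) * monomial f k := by
        rw [monomial_mul, one_mul]
      rw [h1, map_mul, ← X_pow_eq_monomial, map_pow, hX, ih, monomial_pow,
        one_pow, monomial_mul, one_mul, A_add, A_single]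

include hX in
lemma phi_g (j : Fin 6) : φ (g K j) = 0 := by
  rw [g, map_sub, phi_monomial φ hX, phi_monomial φ hX, APQ, sub_self]

include hX in
lemma span_le_ker : Ideal.span (Set.range (g K)) ≤ RingHom.ker φ := by
  rw [Ideal.span_le]
  rintro x ⟨j, rfl⟩
  exact phi_g φ hX j

include hX in
lemma A_N_A (v : Fin 3 ⊕ Fin 3 →₀ ℕ) : A (N (A v)) = A v := by
  have h := span_le_ker φ hX (monomial_sub_nf_mem (K := K) v)
  rw [RingHom.mem_ker, map_sub, phi_monomial φ hX, phi_monomial φ hX, sub_eq_zero] at h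
  exact ((monomial_left_inj one_ne_zero).mp h).symm

include hX in
lemma ker_le_span : RingHom.ker φ ≤ Ideal.span (Set.range (g K)) := by
  intro F hF
  rw [RingHom.mem_ker] at hF
  set G : MvPolynomial (Fin 3 ⊕ Fin 3) K :=
    ∑ v ∈ F.support, monomial (N (A v)) (coeff v F) with hGdef
  have hFG : F - G ∈ Ideal.span (Set.range (g K)) := by
    nth_rewrite 1 [as_sum F]
    rw [hGdef, ← Finset.sum_sub_distrib]
    apply Ideal.sum_mem
    intro v _
    have h : monomial v (coeff v F) - monomial (N (A v)) (coeff v F) =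
        C (coeff v F) * (monomial v 1 - monomial (N (A v)) 1) := by
      rw [mul_sub, C_mul_monomial, C_mul_monomial, mul_one]
    rw [h]
    exact Ideal.mul_mem_left _ _ (monomial_sub_nf_mem v)
  have hφF : φ F = ∑ v ∈ F.support, monomial (A v) (coeff v F) := by
    nth_rewrite 1 [as_sum F]
    rw [map_sum]
    exact Finset.sum_congr rfl fun v _ => phi_monomial φ hX v _
  have hG0 : G = 0 := by
    apply MvPolynomial.ext
    intro w
    rw [coeff_zero, hGdef, coeff_sum]
    by_cases hex : ∃ v0 ∈ F.support, N (A v0) = w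
    · obtain ⟨v0, hv0, rfl⟩ := hex
      have hiff : ∀ v, N (A v) = N (A v0) ↔ A v = A v0 := by
        intro v
        constructor
        · intro h
          rw [← A_N_A φ hX v, h, A_N_A φ hX]
        · intro h; rw [h]
      calc ∑ v ∈ F.support, coeff (N (A v0)) (monomial (N (A v)) (coeff v F))
          = ∑ v ∈ F.support, coeff (A v0) (monomial (A v) (coeff v F)) := by
            apply Finset.sum_congr rfl
            intro v _
            rw [coeff_monomial, coeff_monomial]
            exact if_congr (hiff v) rfl rfl
        _ = coeff (A v0) (φ F) := by rw [hφF, coeff_sum]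
        _ = 0 := by rw [hF, coeff_zero]
    · apply Finset.sum_eq_zero
      intro v hv
      rw [coeff_monomial, if_neg]
      intro h
      exact hex ⟨v, hv, h⟩
  rw [hG0, sub_zero] at hFG
  exact hFG

include hX in
lemma ker_eq_span : RingHom.ker φ = Ideal.span (Set.range (g K)) :=
  le_antisymm (ker_le_span φ hX) (span_le_ker φ hX)

end Field

section Part2
variable {K : Type*} [Field K]

/-- The grading homomorphism realizing the `ℕ³`-multigrading. -/
noncomputable def Φ (K : Type*) [Field K] :
    MvPolynomial (Fin 3 ⊕ Fin 3) K →ₐ[K]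
      MvPolynomial (Fin 3) (MvPolynomial (Fin 3 ⊕ Fin 3) K) :=
  aeval (fun i => monomial (μ i) (X i))

lemma Phi_monomial (v : Fin 3 ⊕ Fin 3 →₀ ℕ) (k : K) :
    Φ K (monomial v k) = monomial (A v) (monomial v k) := by
  induction v using Finsupp.induction with
  | zero =>
      rw [A_zero, monomial_zero', monomial_zero']
      rw [show (Φ K) (C k) = algebraMap K _ k from (Φ K).commutes k]
      rfl
  | single_add a n f _ _ ih =>
      have h1 : monomial (Finsupp.single a n + f) k
          = monomial (Finsupp.single a n) (1:K) * monomial f k := by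
        rw [monomial_mul, one_mul]
      have h2 : (X a : MvPolynomial (Fin 3 ⊕ Fin 3) K) ^ n * monomial f k
          = monomial (Finsupp.single a n + f) k := by
        rw [X_pow_eq_monomial, monomial_mul, one_mul]
      rw [h1, map_mul, ← X_pow_eq_monomial, map_pow]
      rw [show Φ K (X a) = monomial (μ a) (X a) from aeval_X _ a]
      rw [ih, monomial_pow, monomial_mul, A_add, A_single]

/-- Grading: the inner coefficients of `coeff s (Φ h)` have multidegree `s`. -/
lemma Phi_grade (h : MvPolynomial (Fin 3 ⊕ Fin 3) K) (s : Fin 3 →₀ ℕ)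
    (c : Fin 3 ⊕ Fin 3 →₀ ℕ) (hne : coeff c (coeff s (Φ K h)) ≠ 0) : A c = s := by
  by_contra hAc
  apply hne
  have hexp : Φ K h = ∑ v ∈ h.support, monomial (A v) (monomial v (coeff v h)) := by
    nth_rewrite 1 [as_sum h]
    rw [map_sum]
    exact Finset.sum_congr rfl fun v _ => Phi_monomial v _
  rw [hexp, coeff_sum, coeff_sum]
  apply Finset.sum_eq_zero
  intro v _
  rw [coeff_monomial]
  split_ifs with hv
  · rw [coeff_monomial, if_neg]
    intro hvc
    exact hAc (hvc ▸ hv)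
  · rw [coeff_zero]

lemma coeff_g (j : Fin 6) (w : Fin 3 ⊕ Fin 3 →₀ ℕ) :
    coeff w (g K j) =
      (if P j = w then (1:K) else 0) - (if Q j = w then (1:K) else 0) := by
  rw [g, coeff_sub, coeff_monomial, coeff_monomial]

lemma coeff_g_self (j : Fin 6) : coeff (P j) (g K j) = 1 := by
  rw [coeff_g, if_pos rfl, if_neg (fun hh => PQ_ne j hh.symm), sub_zero]

variable (φ : MvPolynomial (Fin 3 ⊕ Fin 3) K →ₐ[K] MvPolynomial (Fin 3) K)
variable (hX : ∀ i, φ (X i) = monomial (μ i) (1:K))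

include hX in
/-- Any binomial generating set of the kernel must contain each `± g j`. -/
lemma must_contain {m : ℕ} (B : Fin m → MvPolynomial (Fin 3 ⊕ Fin 3) K)
    (hbin : ∀ i, IsBinomial (B i))
    (hspan : Ideal.span (Set.range B) = RingHom.ker φ) (j : Fin 6) :
    ∃ i, B i = g K j ∨ B i = - g K j := by
  choose α β hab hBeq using hbin
  have hAab : ∀ i, A (α i) = A (β i) := by
    intro i
    have hBk : B i ∈ RingHom.ker φ :=
      hspan ▸ Ideal.subset_span (Set.mem_range_self i)
    rw [RingHom.mem_ker, hBeq i, map_sub, phi_monomial φ hX, phi_monomial φ hX,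
      sub_eq_zero] at hBk
    exact (monomial_left_inj one_ne_zero).mp hBk
  have hgj : g K j ∈ Ideal.span (Set.range B) := by
    rw [hspan]
    exact RingHom.mem_ker.mpr (phi_g φ hX j)
  obtain ⟨h, hsum⟩ := Ideal.mem_span_range_iff_exists_fun.mp hgj
  by_contra hno
  push_neg at hno
  set d := A (P j) with hd
  have hΦB : ∀ i, Φ K (B i) = monomial (A (α i)) (B i) := by
    intro i
    rw [hBeq i, map_sub, Phi_monomial, Phi_monomial, ← hAab i, ← map_sub, ← hBeq i]
  have hΦg : coeff d (Φ K (g K j)) = g K j := by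
    rw [g, map_sub, Phi_monomial, Phi_monomial, ← APQ, ← map_sub, ← g, coeff_monomial,
      if_pos rfl]
  have hexp : g K j = ∑ i, coeff d (Φ K (h i * B i)) := by
    calc g K j = coeff d (Φ K (g K j)) := hΦg.symm
      _ = coeff d (Φ K (∑ i, h i * B i)) := by rw [hsum]
      _ = ∑ i, coeff d (Φ K (h i * B i)) := by rw [map_sum, coeff_sum]
  have hterm : ∀ i, coeff (P j) (coeff d (Φ K (h i * B i))) = 0 := by
    intro i
    rw [map_mul, hΦB i, coeff_mul_monomial']
    split_ifs with he
    · -- the coefficient polynomial of multidegree d - A(α i)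
      set k : MvPolynomial (Fin 3 ⊕ Fin 3) K := coeff (d - A (α i)) (Φ K (h i)) with hk
      have hgrade : ∀ w, coeff w k ≠ 0 → A w = d - A (α i) := fun w hw => Phi_grade _ _ _ hw
      rw [hBeq i, mul_sub, coeff_sub]
      have hzero1 : coeff (P j) (k * monomial (α i) 1) = 0 := by
        rw [coeff_mul_monomial']
        split_ifs with hle
        · rw [mul_one]
          by_contra hne
          set w := P j - α i with hw
          have hwa : w + α i = P j := tsub_add_cancel_of_le hle
          have hAw : A w = d - A (α i) := hgrade w hne
          have hAwb : A (w + β i) = d := by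
            rw [A_add, ← hAab i, hAw, tsub_add_cancel_of_le he]
          rcases fiber j (w + β i) hAwb with hfib | hfib
          · exact hab i (add_left_cancel ((hwa.trans hfib.symm) : w + α i = w + β i))
          · have hw0 : w = 0 := by
              ext x
              have h1 : w x + α i x = P j x := by rw [← Finsupp.add_apply, hwa]
              have h2 : w x + β i x = Q j x := by rw [← Finsupp.add_apply, hfib]
              rcases Pdisj j x with hp | hq <;> simp only [Finsupp.coe_zero, Pi.zero_apply] <;> omega
            rw [hw0, zero_add] at hwa hfib
            exact hno i |>.1 (by rw [hBeq i, hwa, hfib, g])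
        · rfl
      have hzero2 : coeff (P j) (k * monomial (β i) 1) = 0 := by
        rw [coeff_mul_monomial']
        split_ifs with hle
        · rw [mul_one]
          by_contra hne
          set w := P j - β i with hw
          have hwa : w + β i = P j := tsub_add_cancel_of_le hle
          have hAw : A w = d - A (α i) := hgrade w hne
          have hAwb : A (w + α i) = d := by
            rw [A_add, hAw, tsub_add_cancel_of_le he]
          rcases fiber j (w + α i) hAwb with hfib | hfib
          · exact hab i (add_left_cancel ((hfib.trans hwa.symm) : w + α i = w + β i))
          · have hw0 : w = 0 := by
              ext x
              have h1 : w x + β i x = P j x := by rw [← Finsupp.add_apply, hwa]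
              have h2 : w x + α i x = Q j x := by rw [← Finsupp.add_apply, hfib]
              rcases Pdisj j x with hp | hq <;> simp only [Finsupp.coe_zero, Pi.zero_apply] <;> omega
            rw [hw0, zero_add] at hwa hfib
            refine hno i |>.2 ?_
            rw [hBeq i, hwa, hfib, g, neg_sub]
        · rfl
      rw [hzero1, hzero2, sub_zero]
    · rw [coeff_zero]
  have : (1:K) = 0 := by
    rw [← coeff_g_self j]
    nth_rewrite 1 [hexp]
    rw [coeff_sum]
    exact Finset.sum_eq_zero fun i _ => hterm i
  exact one_ne_zero this

lemma g_inj [CharZero K] (j j' : Fin 6) (h : g K j = g K j') : j = j' := by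
  have hc := congrArg (coeff (P j')) h
  rw [coeff_g, coeff_g] at hc
  have h1 : Q j ≠ P j' := fun hh => P_ne_Q j' j hh.symm
  have h2 : Q j' ≠ P j' := fun hh => PQ_ne j' hh.symm
  rw [if_neg h1, if_neg h2, if_pos rfl, sub_zero, sub_zero] at hc
  split_ifs at hc with hP
  · exact P_injective j j' hP
  · exact absurd hc (by norm_num)

lemma g_ne_neg [CharZero K] (j j' : Fin 6) : g K j ≠ - g K j' := by
  intro h
  have hc := congrArg (coeff (P j)) h
  have h1 : Q j' ≠ P j := fun hh => P_ne_Q j j' hh.symm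
  rw [coeff_g_self, coeff_neg, coeff_g, if_neg h1, sub_zero] at hc
  split_ifs at hc with hP
  · norm_num at hc
  · norm_num at hc

include hX in
lemma no_small_gen [CharZero K] {m : ℕ} (B : Fin m → MvPolynomial (Fin 3 ⊕ Fin 3) K)
    (hm : m < 6) (hbin : ∀ i, IsBinomial (B i))
    (hspan : Ideal.span (Set.range B) = RingHom.ker φ) : False := by
  choose f hf using must_contain φ hX B hbin hspan
  have hinj : Function.Injective f := by
    intro j j' he
    rcases hf j with h1 | h1 <;> rcases hf j' with h2 | h2
    · exact g_inj j j' ((h1.symm.trans (he ▸ h2)))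
    · exact absurd ((h1.symm.trans (he ▸ h2))) (g_ne_neg j j')
    · exact absurd ((h2.symm.trans (he.symm ▸ h1))) (g_ne_neg j' j)
    · have : g K j = g K j' := by
        have := (h1.symm.trans (he ▸ h2))
        exact neg_injective this
      exact g_inj j j' this
  have := Fintype.card_le_of_injective f hinj
  simp at this
  omega

end Part2

end S16


/-- For `K` of characteristic zero and
`φ : K[x₁,x₂,x₃,y₁,y₂,y₃] → K[u₁,u₂,u₃]` with `φ(xᵢ) = uᵢ⁶`, `φ(y₁) = u₁u₃`,
`φ(y₂) = u₂u₃`, `φ(y₃) = u₁⁴u₂⁴u₃²`, the kernel of `φ` is generated by the six binomials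
`y₁⁶−x₁x₃`, `y₂⁶−x₂x₃`, `y₃²−x₁x₂y₁²y₂²`, `y₁⁴y₂⁴−x₃y₃`, `y₁²y₃−x₁y₂⁴`, `y₂²y₃−x₂y₁⁴`,
and cannot be generated by fewer than six binomials. -/
theorem stmt16 (K : Type*) [Field K] [CharZero K]
    (φ : MvPolynomial (Fin 3 ⊕ Fin 3) K →ₐ[K] MvPolynomial (Fin 3) K)
    (hφx1 : φ (X (Sum.inl 0)) = X 0 ^ 6)
    (hφx2 : φ (X (Sum.inl 1)) = X 1 ^ 6)
    (hφx3 : φ (X (Sum.inl 2)) = X 2 ^ 6)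
    (hφy1 : φ (X (Sum.inr 0)) = X 0 * X 2)
    (hφy2 : φ (X (Sum.inr 1)) = X 1 * X 2)
    (hφy3 : φ (X (Sum.inr 2)) = X 0 ^ 4 * X 1 ^ 4 * X 2 ^ 2) :
    RingHom.ker φ =
      Ideal.span
        ({X (Sum.inr 0) ^ 6 - X (Sum.inl 0) * X (Sum.inl 2),
          X (Sum.inr 1) ^ 6 - X (Sum.inl 1) * X (Sum.inl 2),
          X (Sum.inr 2) ^ 2 - X (Sum.inl 0) * X (Sum.inl 1) * X (Sum.inr 0) ^ 2 * X (Sum.inr 1) ^ 2,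
          X (Sum.inr 0) ^ 4 * X (Sum.inr 1) ^ 4 - X (Sum.inl 2) * X (Sum.inr 2),
          X (Sum.inr 0) ^ 2 * X (Sum.inr 2) - X (Sum.inl 0) * X (Sum.inr 1) ^ 4,
          X (Sum.inr 1) ^ 2 * X (Sum.inr 2) - X (Sum.inl 1) * X (Sum.inr 0) ^ 4} :
          Set (MvPolynomial (Fin 3 ⊕ Fin 3) K)) ∧
    ¬ ∃ (m : ℕ) (B : Fin m → MvPolynomial (Fin 3 ⊕ Fin 3) K), m < 6 ∧
        (∀ i, IsBinomial (B i)) ∧ Ideal.span (Set.range B) = RingHom.ker φ := by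
  have hX : ∀ i, φ (X i) = monomial (S16.μ i) (1:K) := by
    intro i
    rcases i with i | i <;> fin_cases i <;>
      simp [S16.μ, S16.monomial_deg3, hφx1, hφx2, hφx3, hφy1, hφy2, hφy3]
  have eq0 : S16.g K 0 = X (Sum.inr 0) ^ 6 - X (Sum.inl 0) * X (Sum.inl 2) := by
    simp [S16.g, S16.P, S16.Q, S16.monomial_vec]
  have eq1 : S16.g K 1 = X (Sum.inr 1) ^ 6 - X (Sum.inl 1) * X (Sum.inl 2) := by
    simp [S16.g, S16.P, S16.Q, S16.monomial_vec]
  have eq2 : S16.g K 2 = X (Sum.inr 2) ^ 2 -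
      X (Sum.inl 0) * X (Sum.inl 1) * X (Sum.inr 0) ^ 2 * X (Sum.inr 1) ^ 2 := by
    simp [S16.g, S16.P, S16.Q, S16.monomial_vec]
  have eq3 : S16.g K 3 = X (Sum.inr 0) ^ 4 * X (Sum.inr 1) ^ 4 -
      X (Sum.inl 2) * X (Sum.inr 2) := by
    simp [S16.g, S16.P, S16.Q, S16.monomial_vec]
  have eq4 : S16.g K 4 = X (Sum.inr 0) ^ 2 * X (Sum.inr 2) -
      X (Sum.inl 0) * X (Sum.inr 1) ^ 4 := by
    simp [S16.g, S16.P, S16.Q, S16.monomial_vec]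
  have eq5 : S16.g K 5 = X (Sum.inr 1) ^ 2 * X (Sum.inr 2) -
      X (Sum.inl 1) * X (Sum.inr 0) ^ 4 := by
    simp [S16.g, S16.P, S16.Q, S16.monomial_vec]
  have hjmem : ∀ j : Fin 6, S16.g K j ∈
      ({X (Sum.inr 0) ^ 6 - X (Sum.inl 0) * X (Sum.inl 2),
          X (Sum.inr 1) ^ 6 - X (Sum.inl 1) * X (Sum.inl 2),
          X (Sum.inr 2) ^ 2 - X (Sum.inl 0) * X (Sum.inl 1) * X (Sum.inr 0) ^ 2 * X (Sum.inr 1) ^ 2,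
          X (Sum.inr 0) ^ 4 * X (Sum.inr 1) ^ 4 - X (Sum.inl 2) * X (Sum.inr 2),
          X (Sum.inr 0) ^ 2 * X (Sum.inr 2) - X (Sum.inl 0) * X (Sum.inr 1) ^ 4,
          X (Sum.inr 1) ^ 2 * X (Sum.inr 2) - X (Sum.inl 1) * X (Sum.inr 0) ^ 4} :
          Set (MvPolynomial (Fin 3 ⊕ Fin 3) K)) := by
    intro j
    fin_cases j <;>
      simp [S16.g, S16.P, S16.Q, S16.monomial_vec, Set.mem_insert_iff]
  have hspan_eq : Ideal.span (Set.range (S16.g K)) =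
      Ideal.span
        ({X (Sum.inr 0) ^ 6 - X (Sum.inl 0) * X (Sum.inl 2),
          X (Sum.inr 1) ^ 6 - X (Sum.inl 1) * X (Sum.inl 2),
          X (Sum.inr 2) ^ 2 - X (Sum.inl 0) * X (Sum.inl 1) * X (Sum.inr 0) ^ 2 * X (Sum.inr 1) ^ 2,
          X (Sum.inr 0) ^ 4 * X (Sum.inr 1) ^ 4 - X (Sum.inl 2) * X (Sum.inr 2),
          X (Sum.inr 0) ^ 2 * X (Sum.inr 2) - X (Sum.inl 0) * X (Sum.inr 1) ^ 4,
          X (Sum.inr 1) ^ 2 * X (Sum.inr 2) - X (Sum.inl 1) * X (Sum.inr 0) ^ 4} :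
          Set (MvPolynomial (Fin 3 ⊕ Fin 3) K)) := by
    apply le_antisymm
    · rw [Ideal.span_le]
      rintro x ⟨j, rfl⟩
      exact Ideal.subset_span (hjmem j)
    · rw [Ideal.span_le]
      intro x hx
      simp only [Set.mem_insert_iff, Set.mem_singleton_iff] at hx
      rcases hx with rfl | rfl | rfl | rfl | rfl | rfl
      · exact Ideal.subset_span ⟨0, eq0⟩
      · exact Ideal.subset_span ⟨1, eq1⟩
      · exact Ideal.subset_span ⟨2, eq2⟩
      · exact Ideal.subset_span ⟨3, eq3⟩
      · exact Ideal.subset_span ⟨4, eq4⟩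
      · exact Ideal.subset_span ⟨5, eq5⟩
  constructor
  · rw [S16.ker_eq_span φ hX, hspan_eq]
  · rintro ⟨m, B, hm, hbin, hspan⟩
    exact S16.no_small_gen φ hX B hm hbin hspan
end
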